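/- Assume the CFL condition 0 ≤ λL ≤ 1. Let y₀ : ℤ → ℝ be a bounded sequence and let w⁰_i = Σ_{j≥i} I_{j−i} y₀_j be the averaged initial data, with iterates w^{n+1} = G(w^n). Then for every i ∈ ℤ and every n ≥ 0, inf_{j∈ℤ} y₀_j ≤ w^n_i ≤ sup_{j∈ℤ} y₀_j. -/

import Mathlib

/- With the flux `F = λ W` and `m ≤ w ≤ M`, summation by parts rewrites `G(w)_i` as
`w_i - I₀ (F(w_i) - F(m)) + Σ_k (I_k - I_{k+1}) (F(w_{i+k+1}) - F(m))`.
The terms of the sum are nonnegative because `Φ` is non-increasing and `F` is monotone, and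
`w_i - I₀ (F(w_i) - F(m)) ≥ m` because `0 ≤ F' ≤ 1` (the CFL condition) and `I₀ ≤ Σ I_k = 1`;
so `G(w) ≥ m`, and `G(w) ≤ M` by the symmetry `w ↦ -w`. The averaged initial data is a convex
combination of values of `y₀`, so the induction starts in `[inf y₀, sup y₀]`. -/

open MeasureTheory

/-- Discrete averaging: `(discAvg I y) i = Σ_{j ≥ i} I_{j-i} y_j`. -/
noncomputable def discAvg (I : ℕ → ℝ) (y : ℤ → ℝ) (i : ℤ) : ℝ :=
  ∑' k : ℕ, I k * y (i + (k : ℤ))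

/-- One step of the filtered scheme:
`G(w)_i = w_i + λ Σ_{j ≥ i} I_{j-i} (W(w_{j+1}) - W(w_j))`. -/
noncomputable def schemeStep (I : ℕ → ℝ) (W : ℝ → ℝ) (lam : ℝ) (w : ℤ → ℝ) (i : ℤ) : ℝ :=
  w i + lam * ∑' k : ℕ, I k * (W (w (i + (k : ℤ) + 1)) - W (w (i + (k : ℤ))))

noncomputable def cellIntegral (φ : ℝ → ℝ) (Δz : ℝ) (k : ℕ) : ℝ :=
  ∫ ζ in (k * Δz)..((k + 1) * Δz), φ ζ

section CellIntegral

variable {φ : ℝ → ℝ} {Δz : ℝ}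

lemma cellIntegral_nonneg (hφ : ∀ z, 0 ≤ z → 0 ≤ φ z) (hΔz : 0 ≤ Δz) (k : ℕ) :
    0 ≤ cellIntegral φ Δz k :=
  intervalIntegral.integral_nonneg (by nlinarith) fun _ hζ ↦
    hφ _ ((by positivity : (0 : ℝ) ≤ k * Δz).trans hζ.1)

lemma intervalIntegrable_cell (hφ : AntitoneOn φ (Set.Ici 0)) (hΔz : 0 ≤ Δz) (k : ℕ) :
    IntervalIntegrable φ volume (k * Δz) ((k + 1) * Δz) := by
  refine AntitoneOn.intervalIntegrable (hφ.mono fun ζ hζ ↦ ?_)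
  rw [Set.uIcc_of_le (by nlinarith)] at hζ
  exact (by positivity : (0 : ℝ) ≤ k * Δz).trans hζ.1

lemma cellIntegral_succ_le (hφ : AntitoneOn φ (Set.Ici 0)) (hΔz : 0 ≤ Δz) (k : ℕ) :
    cellIntegral φ Δz (k + 1) ≤ cellIntegral φ Δz k := by
  have hshift : cellIntegral φ Δz (k + 1) = ∫ ζ in (k * Δz)..((k + 1) * Δz), φ (ζ + Δz) := by
    rw [intervalIntegral.integral_comp_add_right, cellIntegral]
    congr 1 <;> push_cast <;> ring
  have hint := intervalIntegrable_cell hφ hΔz k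
  rw [hshift, cellIntegral]
  refine intervalIntegral.integral_mono_on (by nlinarith) ?_ hint fun ζ hζ ↦ ?_
  · simpa [add_mul] using (intervalIntegrable_cell hφ hΔz (k + 1)).comp_add_right Δz
  · have hζ0 : 0 ≤ ζ := (by positivity : (0 : ℝ) ≤ k * Δz).trans hζ.1
    exact hφ hζ0 (by simp only [Set.mem_Ici]; linarith) (by linarith)

lemma sum_range_cellIntegral (hφ : AntitoneOn φ (Set.Ici 0)) (hΔz : 0 ≤ Δz) (n : ℕ) :
    ∑ k ∈ Finset.range n, cellIntegral φ Δz k = ∫ ζ in (0 : ℝ)..(n * Δz), φ ζ := by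
  have h := intervalIntegral.sum_integral_adjacent_intervals (a := fun k : ℕ ↦ k * Δz)
    (f := φ) (μ := volume) (n := n) fun k _ ↦ by
      simpa using intervalIntegrable_cell hφ hΔz k
  simpa [cellIntegral] using h

lemma hasSum_cellIntegral (hφ₀ : ∀ z, 0 ≤ z → 0 ≤ φ z) (hφ : AntitoneOn φ (Set.Ici 0))
    (hint : IntegrableOn φ (Set.Ioi 0)) (hΔz : 0 < Δz) :
    HasSum (cellIntegral φ Δz) (∫ ζ in Set.Ioi 0, φ ζ) := by
  rw [hasSum_iff_tendsto_nat_of_nonneg (cellIntegral_nonneg hφ₀ hΔz.le)]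
  simp_rw [sum_range_cellIntegral hφ hΔz.le]
  exact intervalIntegral_tendsto_integral_Ioi 0 hint
    (tendsto_natCast_atTop_atTop.atTop_mul_const hΔz)

end CellIntegral

lemma integral_Ioi_rescale (Φ : ℝ → ℝ) {α : ℝ} (hα : 0 < α) :
    ∫ ζ in Set.Ioi 0, (1 / α) * Φ (ζ / α) = ∫ ζ in Set.Ioi 0, Φ ζ := by
  simp_rw [one_div, div_eq_inv_mul]
  rw [integral_const_mul, integral_comp_mul_left_Ioi Φ 0 (inv_pos.2 hα), mul_zero, smul_eq_mul,
    ← mul_assoc, inv_inv, inv_mul_cancel₀ hα.ne', one_mul]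

lemma discAvg_mem_Icc {I : ℕ → ℝ} {y : ℤ → ℝ} {m M : ℝ} (hI₀ : ∀ k, 0 ≤ I k) (hI : HasSum I 1)
    (hy : ∀ j, y j ∈ Set.Icc m M) (i : ℤ) : discAvg I y i ∈ Set.Icc m M := by
  have hsum : Summable fun k : ℕ ↦ I k * y (i + k) := by
    have hdev : Summable fun k : ℕ ↦ I k * (y (i + k) - m) :=
      .of_nonneg_of_le (fun k ↦ mul_nonneg (hI₀ k) (sub_nonneg.2 (hy _).1))
        (fun k ↦ mul_le_mul_of_nonneg_left (sub_le_sub_right (hy _).2 m) (hI₀ k))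
        (hI.summable.mul_right (M - m))
    simpa [mul_sub] using hdev.add (hI.summable.mul_right m)
  exact ⟨hasSum_le (fun k ↦ mul_le_mul_of_nonneg_left (hy _).1 (hI₀ k))
      (by simpa using hI.mul_right m) hsum.hasSum,
    hasSum_le (fun k ↦ mul_le_mul_of_nonneg_left (hy _).2 (hI₀ k)) hsum.hasSum
      (by simpa using hI.mul_right M)⟩

lemma tsum_mul_sub_eq {I u : ℕ → ℝ} (h₀ : Summable fun k ↦ I k * u k)
    (h₁ : Summable fun k ↦ I k * u (k + 1)) :
    ∑' k, I k * (u (k + 1) - u k) = ∑' k, (I k - I (k + 1)) * u (k + 1) - I 0 * u 0 := by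
  have hshift : Summable fun k ↦ I (k + 1) * u (k + 1) :=
    (summable_nat_add_iff (f := fun k ↦ I k * u k) 1).2 h₀
  have hsplit : (fun k ↦ I k * (u (k + 1) - u k))
      = fun k ↦ (I k - I (k + 1)) * u (k + 1) - (I k * u k - I (k + 1) * u (k + 1)) :=
    funext fun k ↦ by ring
  rw [hsplit, (by simpa [sub_mul] using h₁.sub hshift : Summable _).tsum_sub (h₀.sub hshift),
    h₀.tsum_sub hshift, h₀.tsum_eq_zero_add]
  ring

lemma monotone_flux_of_cfl {W : ℝ → ℝ} {lam L : ℝ} (hW : Differentiable ℝ W)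
    (hW' : ∀ x, 0 ≤ deriv W x ∧ deriv W x ≤ L) (hCFL : 0 ≤ lam * L ∧ lam * L ≤ 1) :
    Monotone (fun x ↦ lam * W x) ∧ Monotone (fun x ↦ x - lam * W x) := by
  have hd : ∀ x, 0 ≤ lam * deriv W x ∧ lam * deriv W x ≤ 1 := fun x ↦ by
    obtain ⟨h₀, h₁⟩ := hW' x
    -- for `lam < 0` the CFL condition forces `L ≤ 0`, hence `deriv W x = 0`
    rcases le_or_gt 0 lam with hl | hl <;> constructor <;> nlinarith
  have hF : ∀ x, HasDerivAt (fun x ↦ lam * W x) (lam * deriv W x) x :=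
    fun x ↦ (hW x).hasDerivAt.const_mul lam
  refine ⟨monotone_of_deriv_nonneg (fun x ↦ (hF x).differentiableAt)
    (fun x ↦ (hF x).deriv ▸ (hd x).1), ?_⟩
  have hG : ∀ x, HasDerivAt (fun x ↦ x - lam * W x) (1 - lam * deriv W x) x :=
    fun x ↦ (hasDerivAt_id x).sub (hF x)
  exact monotone_of_deriv_nonneg (fun x ↦ (hG x).differentiableAt)
    (fun x ↦ (hG x).deriv ▸ sub_nonneg.2 (hd x).2)

section SchemeStep

variable {I : ℕ → ℝ} {W : ℝ → ℝ} {lam m M : ℝ} {v : ℤ → ℝ}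

lemma le_schemeStep (hI₀ : ∀ k, 0 ≤ I k) (hI : Antitone I) (hIsum : Summable I) (hI1 : I 0 ≤ 1)
    (hF : Monotone fun x ↦ lam * W x) (hG : Monotone fun x ↦ x - lam * W x)
    (hv : ∀ j, v j ∈ Set.Icc m M) (i : ℤ) : m ≤ schemeStep I W lam v i := by
  set u : ℕ → ℝ := fun k ↦ lam * W (v (i + k)) - lam * W m
  have hu₀ : ∀ k, 0 ≤ u k := fun k ↦ sub_nonneg.2 (hF (hv _).1)
  have hu_le : ∀ k, u k ≤ lam * W M - lam * W m := fun k ↦ sub_le_sub_right (hF (hv _).2) _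
  have hsum : ∀ f : ℕ → ℕ, Summable fun k ↦ I k * u (f k) := fun f ↦
    .of_nonneg_of_le (fun k ↦ mul_nonneg (hI₀ k) (hu₀ _))
      (fun k ↦ mul_le_mul_of_nonneg_left (hu_le _) (hI₀ k)) (hIsum.mul_right _)
  have hflux : lam * ∑' k : ℕ, I k * (W (v (i + k + 1)) - W (v (i + k)))
      = ∑' k, I k * (u (k + 1) - u k) := by
    rw [← tsum_mul_left]
    refine tsum_congr fun k ↦ ?_
    simp only [u]
    push_cast
    ring_nf
  have habel : -(I 0 * u 0) ≤ ∑' k, I k * (u (k + 1) - u k) := by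
    rw [tsum_mul_sub_eq (u := u) (hsum fun k ↦ k) (hsum (· + 1))]
    have hpos : 0 ≤ ∑' k, (I k - I (k + 1)) * u (k + 1) :=
      tsum_nonneg fun k ↦ mul_nonneg (sub_nonneg.2 (hI k.le_succ)) (hu₀ (k + 1))
    linarith
  have hcfl : u 0 ≤ v i - m := by
    have := hG (hv i).1
    simp only [u, Nat.cast_zero, add_zero]
    linarith
  have hI0u : I 0 * u 0 ≤ u 0 := mul_le_of_le_one_left (hu₀ 0) hI1
  rw [schemeStep, hflux]
  linarith

lemma schemeStep_neg (I : ℕ → ℝ) (W : ℝ → ℝ) (lam : ℝ) (v : ℤ → ℝ) (i : ℤ) :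
    schemeStep I (fun x ↦ -W (-x)) lam (fun j ↦ -v j) i = -schemeStep I W lam v i := by
  have hterm : ∀ k : ℕ, I k * (-W (- -v (i + k + 1)) - -W (- -v (i + k)))
      = -(I k * (W (v (i + k + 1)) - W (v (i + k)))) := fun k ↦ by simp only [neg_neg]; ring
  simp only [schemeStep, tsum_congr hterm, tsum_neg]
  ring

lemma schemeStep_le (hI₀ : ∀ k, 0 ≤ I k) (hI : Antitone I) (hIsum : Summable I) (hI1 : I 0 ≤ 1)
    (hF : Monotone fun x ↦ lam * W x) (hG : Monotone fun x ↦ x - lam * W x)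
    (hv : ∀ j, v j ∈ Set.Icc m M) (i : ℤ) : schemeStep I W lam v i ≤ M := by
  have hF' : Monotone fun x ↦ lam * -W (-x) := fun a b hab ↦ by
    have := hF (neg_le_neg hab); linarith
  have hG' : Monotone fun x ↦ x - lam * -W (-x) := fun a b hab ↦ by
    have := hG (neg_le_neg hab); linarith
  have hv' : ∀ j, -v j ∈ Set.Icc (-M) (-m) := fun j ↦ ⟨neg_le_neg (hv j).2, neg_le_neg (hv j).1⟩
  have := le_schemeStep hI₀ hI hIsum hI1 hF' hG' hv' i
  rw [schemeStep_neg] at this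
  linarith

lemma schemeStep_mem_Icc (hI₀ : ∀ k, 0 ≤ I k) (hI : Antitone I) (hIsum : Summable I)
    (hI1 : I 0 ≤ 1) (hF : Monotone fun x ↦ lam * W x) (hG : Monotone fun x ↦ x - lam * W x)
    (hv : ∀ j, v j ∈ Set.Icc m M) (i : ℤ) : schemeStep I W lam v i ∈ Set.Icc m M :=
  ⟨le_schemeStep hI₀ hI hIsum hI1 hF hG hv i, schemeStep_le hI₀ hI hIsum hI1 hF hG hv i⟩

end SchemeStep

theorem stmt_2_general
    (Φ : ℝ → ℝ) (α Δz lam L : ℝ)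
    (hα : 0 < α) (hΔz : 0 < Δz)
    (hΦnonneg : ∀ z : ℝ, 0 ≤ z → 0 ≤ Φ z)
    (hΦmono : ∀ x y : ℝ, 0 ≤ x → x ≤ y → Φ y ≤ Φ x)
    (hΦmass : ∫ ζ in Set.Ioi (0:ℝ), Φ ζ = 1)
    (W : ℝ → ℝ) (hW : Differentiable ℝ W)
    (hW' : ∀ x : ℝ, 0 ≤ deriv W x ∧ deriv W x ≤ L)
    (hCFL : 0 ≤ lam * L ∧ lam * L ≤ 1)
    (I : ℕ → ℝ)
    (hI : ∀ k : ℕ, I k = ∫ ζ in ((k : ℝ) * Δz)..(((k : ℝ) + 1) * Δz), (1/α) * Φ (ζ/α))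
    (y₀ : ℤ → ℝ) (hy₀B : ∃ M, ∀ i, |y₀ i| ≤ M)
    (w : ℕ → ℤ → ℝ)
    (hw0 : ∀ i : ℤ, w 0 i = discAvg I y₀ i)
    (hwrec : ∀ n : ℕ, ∀ i : ℤ, w (n+1) i = schemeStep I W lam (w n) i) :
    ∀ n : ℕ, ∀ i : ℤ, (⨅ j : ℤ, y₀ j) ≤ w n i ∧ w n i ≤ ⨆ j : ℤ, y₀ j := by
  set Φα : ℝ → ℝ := fun ζ ↦ (1 / α) * Φ (ζ / α)
  have hΦα₀ : ∀ z, 0 ≤ z → 0 ≤ Φα z := fun z hz ↦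
    mul_nonneg (by positivity) (hΦnonneg _ (by positivity))
  have hΦα_anti : AntitoneOn Φα (Set.Ici 0) := fun x hx y _ hxy ↦
    mul_le_mul_of_nonneg_left (hΦmono _ _ (div_nonneg hx hα.le)
      (div_le_div_of_nonneg_right hxy hα.le)) (by positivity)
  have hΦα_mass : ∫ ζ in Set.Ioi 0, Φα ζ = 1 := (integral_Ioi_rescale Φ hα).trans hΦmass
  have hIcell : I = cellIntegral Φα Δz := funext hI
  have hI₀ : ∀ k, 0 ≤ I k := hIcell ▸ cellIntegral_nonneg hΦα₀ hΔz.le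
  have hI_anti : Antitone I :=
    hIcell ▸ antitone_nat_of_succ_le (cellIntegral_succ_le hΦα_anti hΔz.le)
  have hI_sum : HasSum I 1 := hIcell ▸ hΦα_mass ▸ hasSum_cellIntegral hΦα₀ hΦα_anti
    (.of_integral_ne_zero (by rw [hΦα_mass]; exact one_ne_zero)) hΔz
  obtain ⟨hF, hG⟩ := monotone_flux_of_cfl hW hW' hCFL
  obtain ⟨B, hB⟩ := hy₀B
  have hy₀ : ∀ j, y₀ j ∈ Set.Icc (⨅ j, y₀ j) (⨆ j, y₀ j) := fun j ↦
    ⟨ciInf_le ⟨-B, by rintro _ ⟨j, rfl⟩; exact (abs_le.1 (hB j)).1⟩ j,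
      le_ciSup ⟨B, by rintro _ ⟨j, rfl⟩; exact (abs_le.1 (hB j)).2⟩ j⟩
  intro n
  induction n with
  | zero => exact fun i ↦ hw0 i ▸ discAvg_mem_Icc hI₀ hI_sum hy₀ i
  | succ n ih =>
    exact fun i ↦ hwrec n i ▸ schemeStep_mem_Icc hI₀ hI_anti hI_sum.summable
      (le_hasSum hI_sum 0 fun k _ ↦ hI₀ k) hF hG ih i

/-- under the CFL condition `0 ≤ λL ≤ 1`, the iterates of the
filtered scheme started from the averaged initial data satisfy the maximum
principle `inf y₀ ≤ w^n_i ≤ sup y₀`. -/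
theorem stmt_2
    (Φ : ℝ → ℝ) (α Δz Δt lam L : ℝ)
    (hα : 0 < α) (hΔz : 0 < Δz) (hΔt : 0 < Δt) (hlam : lam = Δt / Δz)
    (hΦnonneg : ∀ z : ℝ, 0 ≤ z → 0 ≤ Φ z)
    (hΦmono : ∀ x y : ℝ, 0 ≤ x → x ≤ y → Φ y ≤ Φ x)
    (hΦmass : ∫ ζ in Set.Ioi (0:ℝ), Φ ζ = 1)
    (hΦmom : IntegrableOn (fun ζ => ζ * Φ ζ) (Set.Ioi (0:ℝ)))
    (W : ℝ → ℝ) (hW : Differentiable ℝ W)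
    (hW' : ∀ x : ℝ, 0 ≤ deriv W x ∧ deriv W x ≤ L)
    (hCFL : 0 ≤ lam * L ∧ lam * L ≤ 1)
    (I : ℕ → ℝ)
    (hI : ∀ k : ℕ, I k = ∫ ζ in ((k : ℝ) * Δz)..(((k : ℝ) + 1) * Δz), (1/α) * Φ (ζ/α))
    (y₀ : ℤ → ℝ) (hy₀B : ∃ M, ∀ i, |y₀ i| ≤ M)
    (w : ℕ → ℤ → ℝ)
    (hw0 : ∀ i : ℤ, w 0 i = discAvg I y₀ i)
    (hwrec : ∀ n : ℕ, ∀ i : ℤ, w (n+1) i = schemeStep I W lam (w n) i) :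
    ∀ n : ℕ, ∀ i : ℤ, (⨅ j : ℤ, y₀ j) ≤ w n i ∧ w n i ≤ ⨆ j : ℤ, y₀ j :=
  stmt_2_general Φ α Δz lam L hα hΔz hΦnonneg hΦmono hΦmass W hW hW' hCFL I hI y₀ hy₀B w hw0 hwrec
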